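/- For every τ in the upper half plane ℍ, writing e(w) = e^{2πiw}, the following two infinite product identities hold: (i) ∏_{n=1}^∞ (1 − e(nτ)) · ∏_{n=1}^∞ (1 + e((n − 1/2)τ)) = ∏_{n=1}^∞ (1 − e(n·(τ+1)/2)); (ii) ∏_{n=1}^∞ (1 + e((n − 1/2)τ)) · ∏_{n=1}^∞ (1 + e(nτ)) · ∏_{n=1}^∞ (1 − e((n − 1/2)τ)) = 1. All products converge absolutely since |e(τ)| < 1. -/

import Mathlib

open Complex

/-!
With `q = e(τ/2)`, `|q| < 1`, every product is a `q`-Pochhammer symbol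
`(a; w)_∞ = ∏ (1 - a wⁿ)` in `q`. Identity (i) reads `(q²; q²)(-q; q²) = (-q; -q)`: split
`(-q; -q)` into its even- and odd-indexed factors. Identity (ii) reads
`(-q; q²)(q; q²)(-q²; q²) = (q²; q⁴)(-q²; q²) = 1`, the last step being Euler's identity
`(-w; w)(w; w²) = 1` at `w = q²`, which follows from `(-w; w)(w; w) = (w²; w²) = (w; w²)(w²; w²)`
by cancelling `(w²; w²) ≠ 0`.
-/

/-- `e(w) = e^{2πiw}`. -/
noncomputable def ec (w : ℂ) : ℂ := Complex.exp (2 * Real.pi * Complex.I * w)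

section qPochhammer

variable {𝕜 : Type*} [NormedField 𝕜]

/-- The infinite `q`-Pochhammer symbol `(a; q)_∞`. -/
noncomputable def qPochhammer (a q : 𝕜) : 𝕜 := ∏' n : ℕ, (1 - a * q ^ n)

lemma tprod_one_sub_mul_pow (a q : 𝕜) : ∏' n : ℕ, (1 - a * q ^ n) = qPochhammer a q := rfl

lemma tprod_one_add_mul_pow (a q : 𝕜) : ∏' n : ℕ, (1 + a * q ^ n) = qPochhammer (-a) q := by
  simp only [qPochhammer, neg_mul, sub_neg_eq_add]

variable {q : 𝕜}

lemma norm_sq_lt_one (hq : ‖q‖ < 1) : ‖q ^ 2‖ < 1 := by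
  rw [norm_pow]
  exact pow_lt_one₀ (norm_nonneg q) hq two_ne_zero

lemma summable_norm_mul_pow (a : 𝕜) (hq : ‖q‖ < 1) : Summable fun n : ℕ ↦ ‖a * q ^ n‖ := by
  simpa only [norm_mul, norm_pow] using
    (summable_geometric_of_lt_one (norm_nonneg q) hq).mul_left ‖a‖

variable [CompleteSpace 𝕜]

lemma multipliable_one_sub_mul_pow (a : 𝕜) (hq : ‖q‖ < 1) :
    Multipliable fun n : ℕ ↦ 1 - a * q ^ n := by
  simpa only [sub_eq_add_neg] using multipliable_one_add_of_summable
    (f := fun n : ℕ ↦ -(a * q ^ n)) (by simpa only [norm_neg] using summable_norm_mul_pow a hq)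

lemma qPochhammer_ne_zero {a : 𝕜} (ha : ‖a‖ < 1) (hq : ‖q‖ < 1) : qPochhammer a q ≠ 0 := by
  have h_small (n : ℕ) : ‖a * q ^ n‖ < 1 := by
    rw [norm_mul, norm_pow]
    exact mul_lt_one_of_nonneg_of_lt_one_left (norm_nonneg a) ha
      (pow_le_one₀ (norm_nonneg q) hq.le)
  simpa only [qPochhammer, sub_eq_add_neg] using tprod_one_add_ne_zero_of_summable
    (f := fun n : ℕ ↦ -(a * q ^ n))
    (fun n h ↦ by
      have h_one : a * q ^ n = 1 := by linear_combination -h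
      simpa [h_one] using h_small n)
    (by simpa only [norm_neg] using summable_norm_mul_pow a hq)

lemma qPochhammer_eq_mul_sq (a : 𝕜) (hq : ‖q‖ < 1) :
    qPochhammer a q = qPochhammer a (q ^ 2) * qPochhammer (a * q) (q ^ 2) := by
  have hq2 := norm_sq_lt_one hq
  refine (tprod_even_mul_odd ?_ ?_).symm.trans ?_
  · simpa only [pow_mul] using multipliable_one_sub_mul_pow a hq2
  · simpa only [pow_succ, pow_mul, mul_comm _ q, ← mul_assoc] using
      multipliable_one_sub_mul_pow (a * q) hq2
  · simp only [qPochhammer, pow_mul, pow_succ]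
    congr 1
    exact tprod_congr fun n ↦ by ring

lemma qPochhammer_mul_neg (a : 𝕜) (hq : ‖q‖ < 1) :
    qPochhammer a q * qPochhammer (-a) q = qPochhammer (a ^ 2) (q ^ 2) := by
  rw [qPochhammer, qPochhammer, ← (multipliable_one_sub_mul_pow a hq).tprod_mul
    (multipliable_one_sub_mul_pow (-a) hq)]
  exact tprod_congr fun n ↦ by ring

theorem qPochhammer_neg_self_mul_qPochhammer_sq (hq : ‖q‖ < 1) :
    qPochhammer (-q) q * qPochhammer q (q ^ 2) = 1 := by
  have hq2 := norm_sq_lt_one hq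
  refine (mul_eq_right₀ (qPochhammer_ne_zero hq2 hq2)).mp ?_
  calc qPochhammer (-q) q * qPochhammer q (q ^ 2) * qPochhammer (q ^ 2) (q ^ 2)
      = qPochhammer q q * qPochhammer (-q) q := by
        rw [qPochhammer_eq_mul_sq q hq, ← sq]; ring
    _ = qPochhammer (q ^ 2) (q ^ 2) := qPochhammer_mul_neg q hq

end qPochhammer

lemma ec_nat_mul (k : ℕ) (w : ℂ) : ec (k * w) = ec w ^ k := by
  rw [ec, ec, ← Complex.exp_nat_mul]
  ring_nf

lemma ec_add_half (w : ℂ) : ec (w + 1 / 2) = -ec w := by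
  rw [ec, ec, mul_add, Complex.exp_add,
    show 2 * (Real.pi : ℂ) * I * (1 / 2) = Real.pi * I by ring, Complex.exp_pi_mul_I]
  ring

lemma norm_ec_lt_one {w : ℂ} (hw : 0 < w.im) : ‖ec w‖ < 1 := by
  rw [ec, Complex.norm_exp, Real.exp_lt_one_iff]
  simpa [mul_assoc] using mul_pos Real.two_pi_pos hw

lemma ec_succ_mul (n : ℕ) (τ : ℂ) : ec ((n + 1) * τ) = ec (τ / 2) ^ 2 * (ec (τ / 2) ^ 2) ^ n := by
  rw [show ((n : ℂ) + 1) * τ = ((2 * n + 2 : ℕ) : ℂ) * (τ / 2) by push_cast; ring, ec_nat_mul]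
  ring

lemma ec_succ_sub_half_mul (n : ℕ) (τ : ℂ) :
    ec ((n + 1 - 1 / 2) * τ) = ec (τ / 2) * (ec (τ / 2) ^ 2) ^ n := by
  rw [show ((n : ℂ) + 1 - 1 / 2) * τ = ((2 * n + 1 : ℕ) : ℂ) * (τ / 2) by push_cast; ring,
    ec_nat_mul]
  ring

lemma ec_succ_mul_add_one_div_two (n : ℕ) (τ : ℂ) :
    ec ((n + 1) * ((τ + 1) / 2)) = -ec (τ / 2) * (-ec (τ / 2)) ^ n := by
  rw [show ((n : ℂ) + 1) * ((τ + 1) / 2) = ((n + 1 : ℕ) : ℂ) * (τ / 2 + 1 / 2) by push_cast; ring,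
    ec_nat_mul, ec_add_half]
  ring

theorem infinite_product_identities (τ : ℂ) (hτ : 0 < τ.im) :
    ((∏' n : ℕ, (1 - ec (((n : ℂ) + 1) * τ))) *
      ∏' n : ℕ, (1 + ec (((n : ℂ) + 1 - 1 / 2) * τ))) =
      (∏' n : ℕ, (1 - ec (((n : ℂ) + 1) * ((τ + 1) / 2)))) ∧
    ((∏' n : ℕ, (1 + ec (((n : ℂ) + 1 - 1 / 2) * τ))) *
      (∏' n : ℕ, (1 + ec (((n : ℂ) + 1) * τ))) *
      ∏' n : ℕ, (1 - ec (((n : ℂ) + 1 - 1 / 2) * τ))) = 1 := by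
  simp_rw [ec_succ_mul_add_one_div_two, ec_succ_mul, ec_succ_sub_half_mul,
    tprod_one_sub_mul_pow, tprod_one_add_mul_pow]
  set q := ec (τ / 2)
  have hq : ‖q‖ < 1 := norm_ec_lt_one (by simpa using hτ)
  constructor
  · rw [qPochhammer_eq_mul_sq (q := -q) (-q) (by rwa [norm_neg]), neg_sq, neg_mul_neg, ← sq,
      mul_comm]
  · calc qPochhammer (-q) (q ^ 2) * qPochhammer (-q ^ 2) (q ^ 2) * qPochhammer q (q ^ 2)
        = qPochhammer (-q ^ 2) (q ^ 2) * (qPochhammer q (q ^ 2) * qPochhammer (-q) (q ^ 2)) := by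
          ring
      _ = qPochhammer (-q ^ 2) (q ^ 2) * qPochhammer (q ^ 2) ((q ^ 2) ^ 2) := by
          rw [qPochhammer_mul_neg q (norm_sq_lt_one hq)]
      _ = 1 := qPochhammer_neg_self_mul_qPochhammer_sq (norm_sq_lt_one hq)
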